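/- Let d ≥ 2 be an integer. The cohomology group H^{d−2}(AC(d)) of Arone's complex is isomorphic to ℤ/3 if d ∈ {3,4}, and is zero otherwise. In the first case a generator is given by the cohomology class of the (d−2)-cochain u_2 := ⟨2⟩^c + ⟨1⟩^c, where for 0 < m < d the symbol ⟨m⟩^c denotes the basis element ⟨n_1 ⋯ n_{d−2}⟩ of AC(d)^{d−2} indexed by the complement {1,…,d−1} ∖ {m}. -/

import Mathlib

noncomputable section

/-- Basis of degree-`k` part of Arone's complex `AC(d)`: strictly increasing sequences
`0 < n₁ < ⋯ < n_k < d`, encoded as `k`-element subsets of `Ioo 0 d`. -/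
def ACBasis (d k : ℕ) : Type :=
  {S : Finset ℕ // S ⊆ Finset.Ioo 0 d ∧ S.card = k}

/-- Degree-`k` part of Arone's complex: the free abelian group on `ACBasis d k`. -/
abbrev ACMod (d k : ℕ) : Type := ACBasis d k →₀ ℤ

/-- The previous entry `n_{j-1}` (with convention `n₀ = 0`) relative to inserting `m` into `S`. -/
def ACprev (S : Finset ℕ) (m : ℕ) : ℕ := ((S.filter (· < m)).max).unbotD 0

/-- The next entry `n_j` (with convention `n_{k+1} = d`) relative to inserting `m` into `S`. -/
def ACnext (d : ℕ) (S : Finset ℕ) (m : ℕ) : ℕ := ((S.filter (fun x => m < x)).min).untopD d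

/-- The coefficient `(-1)^j * C(n_j - n_{j-1}, m - n_{j-1})` of the differential. -/
def ACcoef (d : ℕ) (S : Finset ℕ) (m : ℕ) : ℤ :=
  (-1 : ℤ) ^ ((S.filter (· < m)).card + 1) *
    (Nat.choose (ACnext d S m - ACprev S m) (m - ACprev S m) : ℤ)

/-- Image of the basis element `⟨S⟩` under the differential. -/
def ACdiffSingle (d k : ℕ) (S : ACBasis d k) : ACMod d (k + 1) :=
  ∑ m ∈ (Finset.Ioo 0 d \ S.1).attach,
    ACcoef d S.1 (m : ℕ) •
      Finsupp.single
        (⟨insert (m : ℕ) S.1, by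
          obtain ⟨hm1, hm2⟩ := Finset.mem_sdiff.mp m.2
          exact ⟨Finset.insert_subset hm1 S.2.1, by
            rw [Finset.card_insert_of_notMem hm2, S.2.2]⟩⟩ : ACBasis d (k + 1)) (1 : ℤ)

/-- The differential `δᵏ : AC(d)ᵏ → AC(d)^{k+1}` of Arone's complex. -/
def ACdiff (d k : ℕ) : ACMod d k →ₗ[ℤ] ACMod d (k + 1) :=
  Finsupp.lsum ℤ fun S => LinearMap.toSpanSingleton ℤ (ACMod d (k + 1)) (ACdiffSingle d k S)

/-- The `k`-cocycles of Arone's complex. -/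
def ACZ (d k : ℕ) : Submodule ℤ (ACMod d k) := LinearMap.ker (ACdiff d k)

/-- The `k`-coboundaries of Arone's complex (`0` in degree `0`). -/
def ACB (d : ℕ) : (k : ℕ) → Submodule ℤ (ACMod d k)
  | 0 => ⊥
  | k + 1 => LinearMap.range (ACdiff d k)

/-- The `k`-th cohomology of Arone's complex, as cocycles modulo coboundaries. -/
abbrev ACH (d k : ℕ) :=
  ACZ d k ⧸ Submodule.comap (ACZ d k).subtype (ACB d k)

/-- The cohomology class of a cocycle. -/
def ACHmk (d k : ℕ) (z : ACZ d k) : ACH d k := Submodule.Quotient.mk z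


/-- The basis element `⟨m⟩ᶜ` of `AC(d)^{d-2}` indexed by the complement `{1,…,d-1} \ {m}`
(junk value `0` unless `0 < m < d`). -/
def ACcompl (d m : ℕ) : ACMod d (d - 2) :=
  if h : 0 < m ∧ m < d then
    Finsupp.single
      (⟨(Finset.Ioo 0 d).erase m, by
        refine ⟨(Finset.erase_subset m _), ?_⟩
        rw [Finset.card_erase_of_mem (Finset.mem_Ioo.mpr h), Nat.card_Ioo]
        omega⟩ : ACBasis d (d - 2)) (1 : ℤ)
  else 0
instance (d k : ℕ) : DecidableEq (ACBasis d k) := by unfold ACBasis; infer_instance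

lemma ACdiff_single (d k : ℕ) (S : ACBasis d k) (c : ℤ) :
    ACdiff d k (Finsupp.single S c) = c • ACdiffSingle d k S := by
  simp [ACdiff, Finsupp.lsum_single, LinearMap.toSpanSingleton_apply]

lemma ACdiffSingle_apply (d k : ℕ) (S : ACBasis d k) (b : ACBasis d (k+1)) :
    ACdiffSingle d k S b =
      ∑ m ∈ (Finset.Ioo 0 d \ S.1), (if insert m S.1 = b.1 then ACcoef d S.1 m else 0) := by
  rw [ACdiffSingle]
  erw [Finsupp.finset_sum_apply]
  rw [← Finset.sum_attach (Finset.Ioo 0 d \ S.1)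
    (fun m => if insert m S.1 = b.1 then ACcoef d S.1 m else 0)]
  refine Finset.sum_congr rfl fun m _ => ?_
  classical
  erw [Finsupp.smul_apply, Finsupp.single_apply]
  by_cases h : insert (m:ℕ) S.1 = b.1
  · rw [if_pos h]; simp [Subtype.ext_iff, h]; exact fun hh => absurd rfl hh
  · rw [if_neg h]; simp [Subtype.ext_iff, h]; exact fun hh => absurd (congrArg Subtype.val hh) h
lemma ACprev_eq (S : Finset ℕ) (m p : ℕ) (hub : ∀ x ∈ S, x < m → x ≤ p)
    (hmem : p = 0 ∨ (p ∈ S ∧ p < m)) : ACprev S m = p := by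
  unfold ACprev
  rcases Finset.eq_empty_or_nonempty (S.filter (· < m)) with he | hne
  · rw [he]
    rcases hmem with rfl | ⟨h1, h2⟩
    · rfl
    · exact absurd (show p ∈ S.filter (· < m) from Finset.mem_filter.mpr ⟨h1, h2⟩)
        (by simp [he])
  · rw [← Finset.coe_max' hne, WithBot.unbotD_coe]
    apply le_antisymm
    · have h := Finset.max'_mem _ hne
      rw [Finset.mem_filter] at h
      exact hub _ h.1 h.2
    · rcases hmem with rfl | ⟨h1, h2⟩
      · exact Nat.zero_le _
      · exact Finset.le_max' _ _ (show p ∈ S.filter (· < m) from Finset.mem_filter.mpr ⟨h1, h2⟩)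

lemma ACnext_eq (d : ℕ) (S : Finset ℕ) (m q : ℕ) (hS : ∀ x ∈ S, x < d)
    (hlb : ∀ x ∈ S, m < x → q ≤ x) (hmem : q = d ∨ (q ∈ S ∧ m < q)) :
    ACnext d S m = q := by
  unfold ACnext
  rcases Finset.eq_empty_or_nonempty (S.filter (fun x => m < x)) with he | hne
  · rw [he]
    rcases hmem with rfl | ⟨h1, h2⟩
    · rfl
    · exact absurd (show q ∈ S.filter (fun x => m < x) from Finset.mem_filter.mpr ⟨h1, h2⟩)
        (by simp [he])
  · rw [← Finset.coe_min' hne, WithTop.untopD_coe]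
    obtain ⟨x, hx⟩ := hne
    have hxf := Finset.mem_filter.mp hx
    rcases hmem with rfl | ⟨h1, h2⟩
    · exact absurd (hS x hxf.1) (not_lt.mpr (hlb x hxf.1 hxf.2))
    · exact le_antisymm
        (Finset.min'_le _ _ (show q ∈ S.filter (fun x => m < x) from
          Finset.mem_filter.mpr ⟨h1, h2⟩))
        (Finset.le_min' _ _ _ fun y hy =>
          hlb y (Finset.mem_filter.mp hy).1 (Finset.mem_filter.mp hy).2)
def ACtop (d : ℕ) (hd : 2 ≤ d) : ACBasis d (d-2+1) :=
  ⟨Finset.Ioo 0 d, subset_rfl, by rw [Nat.card_Ioo]; omega⟩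

lemma ACtop_unique (d : ℕ) (hd : 2 ≤ d) (b : ACBasis d (d-2+1)) : b = ACtop d hd := by
  refine Subtype.ext (Finset.eq_of_subset_of_card_le b.2.1 ?_)
  rw [b.2.2]
  show (Finset.Ioo 0 d).card ≤ d - 2 + 1
  rw [Nat.card_Ioo]; omega

lemma ACMod_top_eq_zero (d : ℕ) (hd : 2 ≤ d) (x : ACMod d (d-2+1))
    (h : x (ACtop d hd) = 0) : x = 0 := by
  ext b; rw [ACtop_unique d hd b, h]; rfl

lemma erase_filter_lt (d m : ℕ) (hm0 : 0 < m) (hmd : m < d) :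
    ((Finset.Ioo 0 d).erase m).filter (· < m) = Finset.Ioo 0 m := by
  ext x
  simp only [Finset.mem_filter, Finset.mem_erase, Finset.mem_Ioo]
  omega

lemma coef_compl (d m : ℕ) (hm0 : 0 < m) (hmd : m < d) :
    ACcoef d ((Finset.Ioo 0 d).erase m) m = 2 * (-1 : ℤ)^m := by
  have hprev : ACprev ((Finset.Ioo 0 d).erase m) m = m - 1 := by
    apply ACprev_eq
    · intro x hx hxm
      omega
    · rcases Nat.eq_or_lt_of_le hm0 with h1 | h1
      · exact Or.inl (by omega)
      · refine Or.inr ⟨Finset.mem_erase.mpr ⟨by omega, Finset.mem_Ioo.mpr ⟨by omega, by omega⟩⟩, by omega⟩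
  have hnext : ACnext d ((Finset.Ioo 0 d).erase m) m = m + 1 := by
    apply ACnext_eq
    · intro x hx
      exact (Finset.mem_Ioo.mp (Finset.mem_erase.mp hx).2).2
    · intro x hx hmx
      have := Finset.mem_erase.mp hx
      omega
    · rcases Nat.eq_or_lt_of_le (show m + 1 ≤ d by omega) with h1 | h1
      · exact Or.inl h1
      · refine Or.inr ⟨Finset.mem_erase.mpr ⟨by omega, Finset.mem_Ioo.mpr ⟨by omega, h1⟩⟩, by omega⟩
  unfold ACcoef
  rw [hprev, hnext, erase_filter_lt d m hm0 hmd, Nat.card_Ioo]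
  rw [show m + 1 - (m - 1) = 2 by omega, show m - (m - 1) = 1 by omega,
    show m - 0 - 1 + 1 = m by omega]
  norm_num [mul_comm]

lemma sdiff_erase_self' (d m : ℕ) (hm : m ∈ Finset.Ioo 0 d) :
    Finset.Ioo 0 d \ (Finset.Ioo 0 d).erase m = {m} := by
  ext x
  simp only [Finset.mem_sdiff, Finset.mem_erase, Finset.mem_singleton, Finset.mem_Ioo] at *
  constructor
  · rintro ⟨h1, h2⟩
    by_contra hx
    exact h2 ⟨hx, h1⟩
  · rintro rfl
    exact ⟨hm, fun h => h.1 rfl⟩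

lemma ACdiffSingle_compl_top (d : ℕ) (hd : 2 ≤ d) (m : ℕ) (hm0 : 0 < m) (hmd : m < d)
    (b : ACBasis d (d-2)) (hb : b.1 = (Finset.Ioo 0 d).erase m) :
    ACdiffSingle d (d-2) b (ACtop d hd) = 2 * (-1 : ℤ)^m := by
  have hmem : m ∈ Finset.Ioo 0 d := Finset.mem_Ioo.mpr ⟨hm0, hmd⟩
  have htop : (ACtop d hd).1 = Finset.Ioo 0 d := rfl
  rw [ACdiffSingle_apply, hb, htop, sdiff_erase_self' d m hmem, Finset.sum_singleton,
    if_pos (Finset.insert_erase hmem), coef_compl d m hm0 hmd]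

lemma ACdiff_compl (d : ℕ) (hd : 2 ≤ d) (m : ℕ) (hm0 : 0 < m) (hmd : m < d) :
    ACdiff d (d-2) (ACcompl d m) = (2 * (-1 : ℤ)^m) • Finsupp.single (ACtop d hd) 1 := by
  erw [ACcompl, dif_pos (show 0 < m ∧ m < d from ⟨hm0, hmd⟩), ACdiff_single, one_smul]
  apply sub_eq_zero.mp
  apply ACMod_top_eq_zero d hd
  erw [Finsupp.sub_apply, Finsupp.smul_apply, Finsupp.single_apply, if_pos rfl,
    ACdiffSingle_compl_top d hd m hm0 hmd _ rfl]
  simp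
def ACmiss (d : ℕ) (b : ACBasis d (d-2)) : ℕ := ((Finset.Ioo 0 d \ b.1).min).untopD 0

lemma sdiff_basis (d : ℕ) (hd : 2 ≤ d) (b : ACBasis d (d-2)) :
    Finset.Ioo 0 d \ b.1 = {ACmiss d b} := by
  have hcard : (Finset.Ioo 0 d \ b.1).card = 1 := by
    rw [Finset.card_sdiff_of_subset b.2.1, Nat.card_Ioo, b.2.2]; omega
  obtain ⟨a, ha⟩ := Finset.card_eq_one.mp hcard
  have hm : ACmiss d b = a := by
    unfold ACmiss; rw [ha, Finset.min_singleton, WithTop.untopD_coe]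
  rw [ha, hm]

lemma ACmiss_mem (d : ℕ) (hd : 2 ≤ d) (b : ACBasis d (d-2)) :
    ACmiss d b ∈ Finset.Ioo 0 d := by
  have h : ACmiss d b ∈ Finset.Ioo 0 d \ b.1 := by
    rw [sdiff_basis d hd b]; exact Finset.mem_singleton_self _
  exact (Finset.mem_sdiff.mp h).1

lemma ACmiss_spec (d : ℕ) (hd : 2 ≤ d) (b : ACBasis d (d-2)) :
    b.1 = (Finset.Ioo 0 d).erase (ACmiss d b) := by
  have hs := sdiff_basis d hd b
  ext x
  rw [Finset.mem_erase]
  constructor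
  · intro hx
    refine ⟨fun hxm => ?_, b.2.1 hx⟩
    have : ACmiss d b ∈ Finset.Ioo 0 d \ b.1 := by
      rw [hs]; exact Finset.mem_singleton_self _
    rw [← hxm] at this
    exact (Finset.mem_sdiff.mp this).2 hx
  · rintro ⟨hne, hIoo⟩
    by_contra hx
    have : x ∈ Finset.Ioo 0 d \ b.1 := Finset.mem_sdiff.mpr ⟨hIoo, hx⟩
    rw [hs, Finset.mem_singleton] at this
    exact hne this

lemma ACmiss_erase (d : ℕ) (m : ℕ) (hm : m ∈ Finset.Ioo 0 d)
    (h2 : (Finset.Ioo 0 d).erase m ⊆ Finset.Ioo 0 d ∧ ((Finset.Ioo 0 d).erase m).card = d - 2) :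
    ACmiss d ⟨(Finset.Ioo 0 d).erase m, h2⟩ = m := by
  have hsd : Finset.Ioo 0 d \ (⟨(Finset.Ioo 0 d).erase m, h2⟩ : ACBasis d (d-2)).1 = {m} :=
    sdiff_erase_self' d m hm
  unfold ACmiss
  rw [hsd, Finset.min_singleton, WithTop.untopD_coe]

lemma erase_basis_eq_iff (d : ℕ) (hd : 2 ≤ d) (m : ℕ) (hm : m ∈ Finset.Ioo 0 d)
    (b : ACBasis d (d-2))
    (h2 : (Finset.Ioo 0 d).erase m ⊆ Finset.Ioo 0 d ∧ ((Finset.Ioo 0 d).erase m).card = d - 2) :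
    (⟨(Finset.Ioo 0 d).erase m, h2⟩ : ACBasis d (d-2)) = b ↔ ACmiss d b = m := by
  constructor
  · rintro rfl; exact ACmiss_erase d m hm h2
  · intro h
    exact (Subtype.ext (by rw [ACmiss_spec d hd b, h])).symm

lemma basis_eq_of_miss (d : ℕ) (hd : 2 ≤ d) (b b' : ACBasis d (d-2))
    (h : ACmiss d b = ACmiss d b') : b = b' :=
  Subtype.ext (by rw [ACmiss_spec d hd b, ACmiss_spec d hd b', h])

lemma ACcompl_apply (d : ℕ) (hd : 2 ≤ d) (m : ℕ) (hm0 : 0 < m) (hmd : m < d)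
    (b : ACBasis d (d-2)) :
    ACcompl d m b = if ACmiss d b = m then 1 else 0 := by
  classical
  rw [ACcompl, dif_pos (show 0 < m ∧ m < d from ⟨hm0, hmd⟩)]
  erw [Finsupp.single_apply]
  exact if_congr (erase_basis_eq_iff d hd m (Finset.mem_Ioo.mpr ⟨hm0, hmd⟩) b _) rfl rfl

lemma erase_eq_iff (d : ℕ) (hd : 2 ≤ d) (m : ℕ) (hm : m ∈ Finset.Ioo 0 d)
    (b : ACBasis d (d-2)) :
    (Finset.Ioo 0 d).erase m = b.1 ↔ ACmiss d b = m := by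
  constructor
  · intro h
    have hm' : m ∉ (Finset.Ioo 0 d).erase m := Finset.notMem_erase _ _
    rw [h, ACmiss_spec d hd b, Finset.mem_erase, not_and] at hm'
    by_contra hne
    exact (hm' fun he => hne he.symm) hm
  · intro h
    rw [ACmiss_spec d hd b, h]
/-- the pair complement set -/
def Sp (d a b : ℕ) : Finset ℕ := ((Finset.Ioo 0 d).erase a).erase b

lemma Sp_subset (d a b : ℕ) : Sp d a b ⊆ Finset.Ioo 0 d :=
  (Finset.erase_subset _ _).trans (Finset.erase_subset _ _)

lemma mem_Sp (d a b x : ℕ) : x ∈ Sp d a b ↔ (x ≠ b ∧ x ≠ a ∧ 0 < x ∧ x < d) := by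
  simp [Sp, Finset.mem_erase, Finset.mem_Ioo, and_assoc]

lemma Sp_card (d a b : ℕ) (ha : 0 < a) (hab : a < b) (hbd : b < d) :
    (Sp d a b).card = d - 3 := by
  rw [Sp, Finset.card_erase_of_mem, Finset.card_erase_of_mem, Nat.card_Ioo]
  · omega
  · exact Finset.mem_Ioo.mpr ⟨by omega, by omega⟩
  · exact Finset.mem_erase.mpr ⟨by omega, Finset.mem_Ioo.mpr ⟨by omega, by omega⟩⟩

lemma Sp_lt_d (d a b : ℕ) : ∀ x ∈ Sp d a b, x < d := fun x hx =>
  ((mem_Sp d a b x).mp hx).2.2.2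

lemma Sp_filter_lt_a (d a b : ℕ) (hab : a < b) (hbd : b < d) :
    (Sp d a b).filter (· < a) = Finset.Ioo 0 a := by
  ext x; simp only [Finset.mem_filter, mem_Sp, Finset.mem_Ioo]; omega

lemma Sp_filter_lt_a1 (d a : ℕ) (hbd : a + 1 < d) :
    (Sp d a (a+1)).filter (· < a+1) = Finset.Ioo 0 a := by
  ext x; simp only [Finset.mem_filter, mem_Sp, Finset.mem_Ioo]; omega

lemma Sp_prev_a (d a b : ℕ) (ha : 0 < a) (hab : a < b) (hbd : b < d) :
    ACprev (Sp d a b) a = a - 1 := by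
  apply ACprev_eq
  · intro x hx hxa; omega
  · rcases Nat.eq_or_lt_of_le ha with h1 | h1
    · exact Or.inl (by omega)
    · exact Or.inr ⟨(mem_Sp d a b _).mpr ⟨by omega, by omega, by omega, by omega⟩, by omega⟩

lemma Sp_prev_a1 (d a : ℕ) (ha : 0 < a) (hbd : a + 1 < d) :
    ACprev (Sp d a (a+1)) (a+1) = a - 1 := by
  apply ACprev_eq
  · intro x hx hxa
    have := (mem_Sp d a (a+1) x).mp hx; omega
  · rcases Nat.eq_or_lt_of_le ha with h1 | h1
    · exact Or.inl (by omega)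
    · exact Or.inr ⟨(mem_Sp d a (a+1) _).mpr ⟨by omega, by omega, by omega, by omega⟩, by omega⟩

lemma Sp_next_adj (d a : ℕ) (m : ℕ) (hm : m = a ∨ m = a + 1) (hbd : a + 1 < d) :
    ACnext d (Sp d a (a+1)) m = a + 2 := by
  apply ACnext_eq _ _ _ _ (Sp_lt_d d a (a+1))
  · intro x hx hmx
    have := (mem_Sp d a (a+1) x).mp hx; omega
  · rcases Nat.eq_or_lt_of_le (show a + 2 ≤ d from by omega) with h1 | h1
    · exact Or.inl h1
    · exact Or.inr ⟨(mem_Sp d a (a+1) _).mpr ⟨by omega, by omega, by omega, by omega⟩, by omega⟩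

lemma coef_adj_a (d a : ℕ) (ha : 0 < a) (hbd : a + 1 < d) :
    ACcoef d (Sp d a (a+1)) a = 3 * (-1 : ℤ)^a := by
  unfold ACcoef
  rw [Sp_prev_a d a (a+1) ha (by omega) hbd, Sp_next_adj d a a (Or.inl rfl) hbd,
    Sp_filter_lt_a d a (a+1) (by omega) hbd, Nat.card_Ioo,
    show a + 2 - (a - 1) = 3 by omega, show a - (a - 1) = 1 by omega,
    show a - 0 - 1 + 1 = a by omega]
  norm_num [mul_comm]

lemma coef_adj_b (d a : ℕ) (ha : 0 < a) (hbd : a + 1 < d) :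
    ACcoef d (Sp d a (a+1)) (a+1) = 3 * (-1 : ℤ)^a := by
  unfold ACcoef
  rw [Sp_prev_a1 d a ha hbd, Sp_next_adj d a (a+1) (Or.inr rfl) hbd,
    Sp_filter_lt_a1 d a hbd, Nat.card_Ioo,
    show a + 2 - (a - 1) = 3 by omega, show a + 1 - (a - 1) = 2 by omega,
    show a - 0 - 1 + 1 = a by omega]
  norm_num [mul_comm]

lemma Sp_next_far_a (d a s : ℕ) (ha : 0 < a) (hbd : a + s + 2 < d) :
    ACnext d (Sp d a (a+s+2)) a = a + 1 := by
  apply ACnext_eq _ _ _ _ (Sp_lt_d d a (a+s+2))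
  · intro x hx hmx
    have := (mem_Sp d a (a+s+2) x).mp hx; omega
  · exact Or.inr ⟨(mem_Sp d a (a+s+2) _).mpr ⟨by omega, by omega, by omega, by omega⟩, by omega⟩

lemma coef_far_a (d a s : ℕ) (ha : 0 < a) (hbd : a + s + 2 < d) :
    ACcoef d (Sp d a (a+s+2)) a = 2 * (-1 : ℤ)^a := by
  unfold ACcoef
  rw [Sp_prev_a d a (a+s+2) ha (by omega) hbd, Sp_next_far_a d a s ha hbd,
    Sp_filter_lt_a d a (a+s+2) (by omega) hbd, Nat.card_Ioo,
    show a + 1 - (a - 1) = 2 by omega, show a - (a - 1) = 1 by omega,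
    show a - 0 - 1 + 1 = a by omega]
  norm_num [mul_comm]

lemma Sp_filter_lt_b (d a s : ℕ) (ha : 0 < a) (hbd : a + s + 2 < d) :
    (Sp d a (a+s+2)).filter (· < a+s+2) = (Finset.Ioo 0 (a+s+2)).erase a := by
  ext x
  simp only [Finset.mem_filter, mem_Sp, Finset.mem_erase, Finset.mem_Ioo]
  omega

lemma coef_far_b (d a s : ℕ) (ha : 0 < a) (hbd : a + s + 2 < d) :
    ACcoef d (Sp d a (a+s+2)) (a+s+2) = 2 * (-1 : ℤ)^(a+s+1) := by
  have hprev : ACprev (Sp d a (a+s+2)) (a+s+2) = a+s+1 := by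
    apply ACprev_eq
    · intro x hx hxm
      have := (mem_Sp d a (a+s+2) x).mp hx; omega
    · exact Or.inr ⟨(mem_Sp d a (a+s+2) _).mpr ⟨by omega, by omega, by omega, by omega⟩, by omega⟩
  have hnext : ACnext d (Sp d a (a+s+2)) (a+s+2) = a+s+3 := by
    apply ACnext_eq _ _ _ _ (Sp_lt_d d a (a+s+2))
    · intro x hx hmx
      have := (mem_Sp d a (a+s+2) x).mp hx; omega
    · rcases Nat.eq_or_lt_of_le (show a + s + 3 ≤ d from by omega) with h1 | h1
      · exact Or.inl h1
      · exact Or.inr ⟨(mem_Sp d a (a+s+2) _).mpr ⟨by omega, by omega, by omega, by omega⟩, by omega⟩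
  unfold ACcoef
  rw [hprev, hnext, Sp_filter_lt_b d a s ha hbd,
    Finset.card_erase_of_mem (Finset.mem_Ioo.mpr ⟨by omega, by omega⟩), Nat.card_Ioo,
    show a + s + 3 - (a+s+1) = 2 by omega, show a + s + 2 - (a+s+1) = 1 by omega,
    show a + s + 2 - 0 - 1 - 1 + 1 = a + s + 1 by omega]
  norm_num [mul_comm]
lemma Ioo_sdiff_Sp (d a b : ℕ) (ha : 0 < a) (hab : a < b) (hbd : b < d) :
    Finset.Ioo 0 d \ Sp d a b = {a, b} := by
  ext x
  simp only [Finset.mem_sdiff, mem_Sp, Finset.mem_insert, Finset.mem_singleton, Finset.mem_Ioo]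
  constructor
  · rintro ⟨⟨hx1, hx2⟩, hx3⟩
    by_contra hc
    push_neg at hc
    exact hx3 ⟨hc.2, hc.1, hx1, hx2⟩
  · rintro (rfl | rfl)
    · exact ⟨⟨ha, by omega⟩, fun h => h.2.1 rfl⟩
    · exact ⟨⟨by omega, hbd⟩, fun h => h.1 rfl⟩

lemma insert_a_Sp (d a b : ℕ) (ha : 0 < a) (hab : a < b) (hbd : b < d) :
    insert a (Sp d a b) = (Finset.Ioo 0 d).erase b := by
  ext x
  simp only [Finset.mem_insert, mem_Sp, Finset.mem_erase, Finset.mem_Ioo]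
  omega

lemma insert_b_Sp (d a b : ℕ) (ha : 0 < a) (hab : a < b) (hbd : b < d) :
    insert b (Sp d a b) = (Finset.Ioo 0 d).erase a := by
  ext x
  simp only [Finset.mem_insert, mem_Sp, Finset.mem_erase, Finset.mem_Ioo]
  omega

lemma coef_far_a' (d a b : ℕ) (ha : 0 < a) (hab : a + 2 ≤ b) (hbd : b < d) :
    ACcoef d (Sp d a b) a = 2 * (-1:ℤ)^a := by
  obtain ⟨s, rfl⟩ : ∃ s, b = a + s + 2 := ⟨b - a - 2, by omega⟩
  exact coef_far_a d a s ha hbd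

lemma coef_far_b' (d a b : ℕ) (ha : 0 < a) (hab : a + 2 ≤ b) (hbd : b < d) :
    ACcoef d (Sp d a b) b = 2 * (-1:ℤ)^(b+1) := by
  obtain ⟨s, rfl⟩ : ∃ s, b = a + s + 2 := ⟨b - a - 2, by omega⟩
  rw [coef_far_b d a s ha hbd]
  ring

lemma diff_single_Sp_apply (e a b : ℕ) (ha : 0 < a) (hab : a < b) (hbd : b < e+5)
    (hS : Sp (e+5) a b ⊆ Finset.Ioo 0 (e+5) ∧ (Sp (e+5) a b).card = e+2)
    (bb : ACBasis (e+5) (e+3)) :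
    ACdiff (e+5) (e+2) (Finsupp.single (⟨Sp (e+5) a b, hS⟩ : ACBasis (e+5) (e+2)) 1) bb
      = (if ACmiss (e+5) bb = b then ACcoef (e+5) (Sp (e+5) a b) a else 0)
      + (if ACmiss (e+5) bb = a then ACcoef (e+5) (Sp (e+5) a b) b else 0) := by
  have h1 := ACdiff_single (e+5) (e+2) (⟨Sp (e+5) a b, hS⟩ : ACBasis (e+5) (e+2)) 1
  rw [h1, one_smul]
  have h2 := ACdiffSingle_apply (e+5) (e+2) (⟨Sp (e+5) a b, hS⟩ : ACBasis (e+5) (e+2)) bb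
  rw [h2]
  have hval : (⟨Sp (e+5) a b, hS⟩ : ACBasis (e+5) (e+2)).1 = Sp (e+5) a b := rfl
  rw [hval, Ioo_sdiff_Sp (e+5) a b ha hab hbd, Finset.sum_pair (show a ≠ b by omega)]
  have hia := insert_a_Sp (e+5) a b ha hab hbd
  have hib := insert_b_Sp (e+5) a b ha hab hbd
  rw [hia, hib]
  have hea := erase_eq_iff (e+5) (by omega) a (Finset.mem_Ioo.mpr ⟨ha, by omega⟩) bb
  have heb := erase_eq_iff (e+5) (by omega) b (Finset.mem_Ioo.mpr ⟨by omega, hbd⟩) bb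
  rw [if_congr heb rfl rfl, if_congr hea rfl rfl]
/-! ### the d ≥ 5 section, with d = e+5 and uniform indices -/

def compl5 (e m : ℕ) : ACMod (e+5) (e+2+1) := ACcompl (e+5) m

def top5 (e : ℕ) : ACBasis (e+5) (e+2+1+1) := ACtop (e+5) (by omega)

lemma compl5_apply (e m : ℕ) (hm0 : 0 < m) (hmd : m < e+5) (bb : ACBasis (e+5) (e+2+1)) :
    compl5 e m bb = if ACmiss (e+5) bb = m then 1 else 0 :=
  ACcompl_apply (e+5) (by omega) m hm0 hmd bb

lemma diff_compl5 (e m : ℕ) (hm0 : 0 < m) (hmd : m < e+5) :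
    ACdiff (e+5) (e+2+1) (compl5 e m) = (2*(-1:ℤ)^m) • Finsupp.single (top5 e) 1 :=
  ACdiff_compl (e+5) (by omega) m hm0 hmd

def g5 (e a : ℕ) : ACMod (e+5) (e+2+1) := compl5 e a + compl5 e (a+1)

lemma gA (e a : ℕ) (ha : 0 < a) (hae : a ≤ e+1) :
    ∃ x : ACMod (e+5) (e+2), ACdiff (e+5) (e+2) x = g5 e a := by
  have hS1 : Sp (e+5) a (a+1) ⊆ Finset.Ioo 0 (e+5) ∧ (Sp (e+5) a (a+1)).card = e+2 :=
    ⟨Sp_subset _ _ _, by rw [Sp_card (e+5) a (a+1) ha (by omega) (by omega)]; omega⟩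
  have hS2 : Sp (e+5) a (a+3) ⊆ Finset.Ioo 0 (e+5) ∧ (Sp (e+5) a (a+3)).card = e+2 :=
    ⟨Sp_subset _ _ _, by rw [Sp_card (e+5) a (a+3) ha (by omega) (by omega)]; omega⟩
  have hS3 : Sp (e+5) (a+1) (a+3) ⊆ Finset.Ioo 0 (e+5) ∧ (Sp (e+5) (a+1) (a+3)).card = e+2 :=
    ⟨Sp_subset _ _ _, by rw [Sp_card (e+5) (a+1) (a+3) (by omega) (by omega) (by omega)]; omega⟩
  refine ⟨((-1:ℤ))^a • (Finsupp.single (⟨Sp (e+5) a (a+1), hS1⟩ : ACBasis (e+5) (e+2)) 1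
      - Finsupp.single (⟨Sp (e+5) a (a+3), hS2⟩ : ACBasis (e+5) (e+2)) 1
      - Finsupp.single (⟨Sp (e+5) (a+1) (a+3), hS3⟩ : ACBasis (e+5) (e+2)) 1), ?_⟩
  ext bb
  erw [map_smul, map_sub, map_sub, Finsupp.smul_apply, Finsupp.sub_apply, Finsupp.sub_apply]
  have hd1 := diff_single_Sp_apply e a (a+1) ha (by omega) (by omega) hS1 bb
  have hd2 := diff_single_Sp_apply e a (a+3) ha (by omega) (by omega) hS2 bb
  have hd3 := diff_single_Sp_apply e (a+1) (a+3) (by omega) (by omega) (by omega) hS3 bb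
  erw [hd1, hd2, hd3]
  rw [coef_adj_a (e+5) a ha (by omega), coef_adj_b (e+5) a ha (by omega),
    coef_far_a' (e+5) a (a+3) ha (by omega) (by omega),
    coef_far_b' (e+5) a (a+3) ha (by omega) (by omega),
    coef_far_a' (e+5) (a+1) (a+3) (by omega) (by omega) (by omega),
    coef_far_b' (e+5) (a+1) (a+3) (by omega) (by omega) (by omega)]
  rw [show g5 e a = compl5 e a + compl5 e (a+1) from rfl, Finsupp.add_apply,
    compl5_apply e a ha (by omega) bb, compl5_apply e (a+1) (by omega) (by omega) bb]
  rcases Nat.even_or_odd a with hpar | hpar <;>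
    simp only [pow_add, hpar.neg_one_pow, pow_one] <;>
    norm_num <;>
    split_ifs <;>
    omega

lemma gB (e t : ℕ) (hte : t ≤ e) :
    ∃ x : ACMod (e+5) (e+2), ACdiff (e+5) (e+2) x = g5 e (t+3) := by
  have hS1 : Sp (e+5) (t+1) (t+3) ⊆ Finset.Ioo 0 (e+5) ∧ (Sp (e+5) (t+1) (t+3)).card = e+2 :=
    ⟨Sp_subset _ _ _, by rw [Sp_card (e+5) (t+1) (t+3) (by omega) (by omega) (by omega)]; omega⟩
  have hS2 : Sp (e+5) (t+1) (t+4) ⊆ Finset.Ioo 0 (e+5) ∧ (Sp (e+5) (t+1) (t+4)).card = e+2 :=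
    ⟨Sp_subset _ _ _, by rw [Sp_card (e+5) (t+1) (t+4) (by omega) (by omega) (by omega)]; omega⟩
  have hS3 : Sp (e+5) (t+3) (t+4) ⊆ Finset.Ioo 0 (e+5) ∧ (Sp (e+5) (t+3) (t+4)).card = e+2 :=
    ⟨Sp_subset _ _ _, by rw [Sp_card (e+5) (t+3) (t+4) (by omega) (by omega) (by omega)]; omega⟩
  refine ⟨((-1:ℤ))^t • (Finsupp.single (⟨Sp (e+5) (t+1) (t+3), hS1⟩ : ACBasis (e+5) (e+2)) 1
      + Finsupp.single (⟨Sp (e+5) (t+1) (t+4), hS2⟩ : ACBasis (e+5) (e+2)) 1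
      - Finsupp.single (⟨Sp (e+5) (t+3) (t+4), hS3⟩ : ACBasis (e+5) (e+2)) 1), ?_⟩
  ext bb
  erw [map_smul, map_sub, map_add, Finsupp.smul_apply, Finsupp.sub_apply, Finsupp.add_apply]
  have hd1 := diff_single_Sp_apply e (t+1) (t+3) (by omega) (by omega) (by omega) hS1 bb
  have hd2 := diff_single_Sp_apply e (t+1) (t+4) (by omega) (by omega) (by omega) hS2 bb
  have hd3 := diff_single_Sp_apply e (t+3) (t+4) (by omega) (by omega) (by omega) hS3 bb
  erw [hd1, hd2, hd3]
  rw [coef_adj_a (e+5) (t+3) (by omega) (by omega), coef_adj_b (e+5) (t+3) (by omega) (by omega),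
    coef_far_a' (e+5) (t+1) (t+3) (by omega) (by omega) (by omega),
    coef_far_b' (e+5) (t+1) (t+3) (by omega) (by omega) (by omega),
    coef_far_a' (e+5) (t+1) (t+4) (by omega) (by omega) (by omega),
    coef_far_b' (e+5) (t+1) (t+4) (by omega) (by omega) (by omega)]
  rw [show g5 e (t+3) = compl5 e (t+3) + compl5 e (t+3+1) from rfl, Finsupp.add_apply,
    compl5_apply e (t+3) (by omega) (by omega) bb, compl5_apply e (t+3+1) (by omega) (by omega) bb]
  rcases Nat.even_or_odd t with hpar | hpar <;>
    simp only [pow_add, hpar.neg_one_pow, pow_one] <;>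
    norm_num <;>
    split_ifs <;>
    omega

lemma gC (e t : ℕ) (hte : t ≤ e) :
    ∃ x : ACMod (e+5) (e+2), ACdiff (e+5) (e+2) x = g5 e (t+2) := by
  have hS1 : Sp (e+5) (t+2) (t+3) ⊆ Finset.Ioo 0 (e+5) ∧ (Sp (e+5) (t+2) (t+3)).card = e+2 :=
    ⟨Sp_subset _ _ _, by rw [Sp_card (e+5) (t+2) (t+3) (by omega) (by omega) (by omega)]; omega⟩
  have hS2 : Sp (e+5) (t+1) (t+3) ⊆ Finset.Ioo 0 (e+5) ∧ (Sp (e+5) (t+1) (t+3)).card = e+2 :=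
    ⟨Sp_subset _ _ _, by rw [Sp_card (e+5) (t+1) (t+3) (by omega) (by omega) (by omega)]; omega⟩
  have hS3 : Sp (e+5) (t+1) (t+4) ⊆ Finset.Ioo 0 (e+5) ∧ (Sp (e+5) (t+1) (t+4)).card = e+2 :=
    ⟨Sp_subset _ _ _, by rw [Sp_card (e+5) (t+1) (t+4) (by omega) (by omega) (by omega)]; omega⟩
  have hS4 : Sp (e+5) (t+2) (t+4) ⊆ Finset.Ioo 0 (e+5) ∧ (Sp (e+5) (t+2) (t+4)).card = e+2 :=
    ⟨Sp_subset _ _ _, by rw [Sp_card (e+5) (t+2) (t+4) (by omega) (by omega) (by omega)]; omega⟩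
  refine ⟨((-1:ℤ))^t • (Finsupp.single (⟨Sp (e+5) (t+2) (t+3), hS1⟩ : ACBasis (e+5) (e+2)) 1
      + Finsupp.single (⟨Sp (e+5) (t+1) (t+3), hS2⟩ : ACBasis (e+5) (e+2)) 1
      + Finsupp.single (⟨Sp (e+5) (t+1) (t+4), hS3⟩ : ACBasis (e+5) (e+2)) 1
      + Finsupp.single (⟨Sp (e+5) (t+2) (t+4), hS4⟩ : ACBasis (e+5) (e+2)) 1), ?_⟩
  ext bb
  erw [map_smul, map_add, map_add, map_add, Finsupp.smul_apply, Finsupp.add_apply,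
    Finsupp.add_apply, Finsupp.add_apply]
  have hd1 := diff_single_Sp_apply e (t+2) (t+3) (by omega) (by omega) (by omega) hS1 bb
  have hd2 := diff_single_Sp_apply e (t+1) (t+3) (by omega) (by omega) (by omega) hS2 bb
  have hd3 := diff_single_Sp_apply e (t+1) (t+4) (by omega) (by omega) (by omega) hS3 bb
  have hd4 := diff_single_Sp_apply e (t+2) (t+4) (by omega) (by omega) (by omega) hS4 bb
  erw [hd1, hd2, hd3, hd4]
  rw [coef_adj_a (e+5) (t+2) (by omega) (by omega), coef_adj_b (e+5) (t+2) (by omega) (by omega),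
    coef_far_a' (e+5) (t+1) (t+3) (by omega) (by omega) (by omega),
    coef_far_b' (e+5) (t+1) (t+3) (by omega) (by omega) (by omega),
    coef_far_a' (e+5) (t+1) (t+4) (by omega) (by omega) (by omega),
    coef_far_b' (e+5) (t+1) (t+4) (by omega) (by omega) (by omega),
    coef_far_a' (e+5) (t+2) (t+4) (by omega) (by omega) (by omega),
    coef_far_b' (e+5) (t+2) (t+4) (by omega) (by omega) (by omega)]
  rw [show g5 e (t+2) = compl5 e (t+2) + compl5 e (t+2+1) from rfl, Finsupp.add_apply,
    compl5_apply e (t+2) (by omega) (by omega) bb, compl5_apply e (t+2+1) (by omega) (by omega) bb]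
  rcases Nat.even_or_odd t with hpar | hpar <;>
    simp only [pow_add, hpar.neg_one_pow, pow_one] <;>
    norm_num <;>
    split_ifs <;>
    omega

lemma g_mem (e a : ℕ) (ha : 0 < a) (hae : a ≤ e+3) :
    ∃ x : ACMod (e+5) (e+2), ACdiff (e+5) (e+2) x = g5 e a := by
  rcases (show a ≤ e+1 ∨ a = e+2 ∨ a = e+3 by omega) with h | h | h
  · exact gA e a ha h
  · subst h; exact gC e e le_rfl
  · subst h; exact gB e e le_rfl
lemma vanish5 (e : ℕ) (n : ℕ) : ∀ z : ACMod (e+5) (e+2+1), n ≤ e + 4 →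
    ACdiff (e+5) (e+2+1) z = 0 →
    (∀ bb : ACBasis (e+5) (e+2+1), n < ACmiss (e+5) bb → z bb = 0) →
    ∃ x : ACMod (e+5) (e+2), ACdiff (e+5) (e+2) x = z := by
  induction n using Nat.strong_induction_on with
  | _ n ih =>
  intro z hn hz hcoef
  rcases n with _ | n
  · -- n = 0 : all coefficients vanish
    have hz0 : z = 0 := by
      ext bb
      have hmem := ACmiss_mem (e+5) (by omega) bb
      exact hcoef bb (Finset.mem_Ioo.mp hmem).1
    exact ⟨0, by rw [map_zero, hz0]⟩
  rcases n with _ | n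
  · -- n = 1 : use the cocycle condition
    have hb1p : (Finset.Ioo 0 (e+5)).erase 1 ⊆ Finset.Ioo 0 (e+5) ∧
        ((Finset.Ioo 0 (e+5)).erase 1).card = e+2+1 :=
      ⟨Finset.erase_subset _ _, by
        rw [Finset.card_erase_of_mem (Finset.mem_Ioo.mpr ⟨by omega, by omega⟩), Nat.card_Ioo]
        omega⟩
    set b1 : ACBasis (e+5) (e+2+1) := ⟨(Finset.Ioo 0 (e+5)).erase 1, hb1p⟩ with hb1def
    have hmiss1 : ACmiss (e+5) b1 = 1 := ACmiss_erase (e+5) 1 (Finset.mem_Ioo.mpr ⟨by omega, by omega⟩) hb1p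
    have hz1 : z = (z b1) • Finsupp.single b1 1 := by
      ext bb
      rw [Finsupp.smul_apply, Finsupp.single_apply]
      by_cases hbb : b1 = bb
      · rw [if_pos hbb, ← hbb]; simp
      · rw [if_neg hbb]
        have hne : ACmiss (e+5) bb ≠ 1 := fun h =>
          hbb (basis_eq_of_miss (e+5) (by omega) b1 bb (by rw [hmiss1, h]))
        have h0 : 0 < ACmiss (e+5) bb := (Finset.mem_Ioo.mp (ACmiss_mem (e+5) (by omega) bb)).1
        rw [hcoef bb (by omega)]; simp
    have hsingle : Finsupp.single b1 (1:ℤ) = compl5 e 1 := by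
      show _ = ACcompl (e+5) 1
      rw [ACcompl, dif_pos (show 0 < 1 ∧ 1 < e+5 from ⟨by omega, by omega⟩)]
    have hδ : (0 : ACMod (e+5) (e+2+1+1)) = (z b1) • ((2*(-1:ℤ)^1) • Finsupp.single (top5 e) 1) := by
      rw [← hz]
      conv_lhs => rw [hz1]
      rw [map_smul, hsingle, diff_compl5 e 1 (by omega) (by omega)]
    have hc0 : z b1 = 0 := by
      have happ := congrArg (fun f : ACMod (e+5) (e+2+1+1) => f (top5 e)) hδ
      simp only [Finsupp.coe_zero, Pi.zero_apply, Finsupp.smul_apply, Finsupp.single_apply,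
        if_pos rfl] at happ
      simp only [pow_one, smul_eq_mul, mul_one] at happ
      norm_num at happ
      omega
    refine ⟨0, by rw [map_zero, hz1, hc0, zero_smul]⟩
  · -- step : kill the coefficient at n+2 using g5 (n+1)
    have hb2p : (Finset.Ioo 0 (e+5)).erase (n+2) ⊆ Finset.Ioo 0 (e+5) ∧
        ((Finset.Ioo 0 (e+5)).erase (n+2)).card = e+2+1 :=
      ⟨Finset.erase_subset _ _, by
        rw [Finset.card_erase_of_mem (Finset.mem_Ioo.mpr ⟨by omega, by omega⟩), Nat.card_Ioo]
        omega⟩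
    set b2 : ACBasis (e+5) (e+2+1) := ⟨(Finset.Ioo 0 (e+5)).erase (n+2), hb2p⟩ with hb2def
    have hmiss2 : ACmiss (e+5) b2 = n+2 :=
      ACmiss_erase (e+5) (n+2) (Finset.mem_Ioo.mpr ⟨by omega, by omega⟩) hb2p
    set c : ℤ := z b2 with hcdef
    set z' : ACMod (e+5) (e+2+1) := z - c • g5 e (n+1) with hz'def
    have hg5z : ACdiff (e+5) (e+2+1) (g5 e (n+1)) = 0 := by
      rw [show g5 e (n+1) = compl5 e (n+1) + compl5 e (n+1+1) from rfl, map_add,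
        diff_compl5 e (n+1) (by omega) (by omega), diff_compl5 e (n+1+1) (by omega) (by omega),
        ← add_smul]
      rw [show (2*(-1:ℤ)^(n+1) + 2*(-1:ℤ)^(n+1+1)) = 0 by ring, zero_smul]
    have hz'c : ACdiff (e+5) (e+2+1) z' = 0 := by
      rw [hz'def, map_sub, map_smul, hz, hg5z, smul_zero, sub_zero]
    have hz'coef : ∀ bb : ACBasis (e+5) (e+2+1), n+1 < ACmiss (e+5) bb → z' bb = 0 := by
      intro bb hbb
      rw [hz'def, Finsupp.sub_apply, Finsupp.smul_apply,
        show g5 e (n+1) = compl5 e (n+1) + compl5 e (n+1+1) from rfl, Finsupp.add_apply,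
        compl5_apply e (n+1) (by omega) (by omega) bb,
        compl5_apply e (n+1+1) (by omega) (by omega) bb]
      rcases Nat.eq_or_lt_of_le hbb with heq | hlt
      · -- miss bb = n+2 : bb = b2
        have hbbe : bb = b2 := basis_eq_of_miss (e+5) (by omega) bb b2 (by rw [hmiss2, ← heq])
        rw [if_neg (by omega), if_pos (by omega : ACmiss (e+5) bb = n+1+1), hbbe]
        simp [hcdef]
      · rw [if_neg (by omega), if_neg (by omega), hcoef bb (by omega)]
        simp
    obtain ⟨x', hx'⟩ := ih (n+1) (by omega) z' (by omega) hz'c hz'coef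
    obtain ⟨xg, hxg⟩ := g_mem e (n+1) (by omega) (by omega)
    refine ⟨x' + c • xg, ?_⟩
    rw [map_add, map_smul, hx', hxg, hz'def]
    abel
lemma H5_subsingleton (e : ℕ) : Subsingleton (ACH (e+5) ((e+5)-2)) := by
  have hall : ∀ y : ACH (e+5) ((e+5)-2), y = 0 := by
    intro y
    obtain ⟨z, rfl⟩ := Submodule.Quotient.mk_surjective _ y
    rw [Submodule.Quotient.mk_eq_zero]
    have hz : ACdiff (e+5) (e+2+1) (z.1 : ACMod (e+5) (e+2+1)) = 0 := LinearMap.mem_ker.mp z.2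
    obtain ⟨x, hx⟩ := vanish5 e (e+4) z.1 le_rfl hz
      (fun bb hbb => by
        have hmem := ACmiss_mem (e+5) (by omega) bb
        rw [Finset.mem_Ioo] at hmem
        omega)
    show (z : ACMod (e+5) (e+5-2)) ∈ ACB (e+5) ((e+5)-2)
    exact ⟨x, hx⟩
  exact ⟨fun a b => by rw [hall a, hall b]⟩

lemma H2_subsingleton : Subsingleton (ACH 2 (2-2)) := by
  have hall : ∀ y : ACH 2 (2-2), y = 0 := by
    intro y
    obtain ⟨z, rfl⟩ := Submodule.Quotient.mk_surjective _ y
    rw [Submodule.Quotient.mk_eq_zero]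
    have hbp : (∅ : Finset ℕ) ⊆ Finset.Ioo 0 2 ∧ (∅ : Finset ℕ).card = 2-2 := ⟨by simp, rfl⟩
    set b0 : ACBasis 2 (2-2) := ⟨∅, hbp⟩ with hb0
    have huniq : ∀ b : ACBasis 2 (2-2), b = b0 :=
      fun b => Subtype.ext (Finset.card_eq_zero.mp b.2.2)
    have hz := LinearMap.mem_ker.mp z.2
    have hdec : (z : ACMod 2 (2-2)) = (z : ACMod 2 (2-2)) b0 • Finsupp.single b0 1 := by
      ext bb
      rw [huniq bb]
      simp [Finsupp.single_apply]
    have hdval : ACdiffSingle 2 (2-2) b0 (ACtop 2 le_rfl) = -2 := by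
      rw [ACdiffSingle_apply]
      rw [show (b0 : ACBasis 2 (2-2)).1 = ∅ from rfl,
        show (ACtop 2 le_rfl).1 = Finset.Ioo 0 2 from rfl,
        show Finset.Ioo 0 2 \ ∅ = {1} from by decide, Finset.sum_singleton]
      decide
    have happ := congrArg (fun f : ACMod 2 (2-2+1) => f (ACtop 2 le_rfl)) hz
    rw [show ACdiff 2 (2-2) (z : ACMod 2 (2-2))
        = ((z : ACMod 2 (2-2)) b0) • ACdiffSingle 2 (2-2) b0 from by
      conv_lhs => rw [hdec]
      rw [map_smul, ACdiff_single, one_smul]] at happ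
    simp only [Finsupp.smul_apply, hdval, Finsupp.coe_zero, Pi.zero_apply, smul_eq_mul] at happ
    have hc : (z : ACMod 2 (2-2)) b0 = 0 := by omega
    have hz0 : (z : ACMod 2 (2-2)) = 0 := by rw [hdec, hc, zero_smul]
    show (z : ACMod 2 (2-2)) ∈ ACB 2 (2-2)
    rw [hz0]
    exact Submodule.zero_mem _
  exact ⟨fun a b => by rw [hall a, hall b]⟩
/-! ### d = 3 -/

lemma h3le : (2:ℕ) ≤ 3 := by norm_num

def β1 : ACBasis 3 (3-2) := ⟨{1}, by decide⟩
def β2 : ACBasis 3 (3-2) := ⟨{2}, by decide⟩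
def bE3 : ACBasis 3 0 := ⟨∅, by decide⟩

lemma β1_ne_β2 : β1 ≠ β2 := fun h => absurd (congrArg Subtype.val h) (by decide)

lemma classify3 (b : ACBasis 3 (3-2)) : b = β1 ∨ b = β2 := by
  obtain ⟨a, ha⟩ := Finset.card_eq_one.mp b.2.2
  have hmem : a ∈ Finset.Ioo 0 3 := b.2.1 (by rw [ha]; exact Finset.mem_singleton_self a)
  rw [Finset.mem_Ioo] at hmem
  obtain ⟨hm1, hm2⟩ := hmem
  interval_cases a
  · exact Or.inl (Subtype.ext (by rw [ha]; rfl))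
  · exact Or.inr (Subtype.ext (by rw [ha]; rfl))

lemma classify30 (b : ACBasis 3 0) : b = bE3 :=
  Subtype.ext (Finset.card_eq_zero.mp b.2.2)

lemma compl3_2 : ACcompl 3 2 = Finsupp.single β1 1 := by
  rw [ACcompl, dif_pos (show 0 < 2 ∧ 2 < 3 by omega)]
  exact congrArg (fun b => Finsupp.single b (1:ℤ)) (Subtype.ext (by decide))

lemma compl3_1 : ACcompl 3 1 = Finsupp.single β2 1 := by
  rw [ACcompl, dif_pos (show 0 < 1 ∧ 1 < 3 by omega)]
  exact congrArg (fun b => Finsupp.single b (1:ℤ)) (Subtype.ext (by decide))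

lemma zdecomp3 (z : ACMod 3 (3-2)) :
    z = z β1 • Finsupp.single β1 1 + z β2 • Finsupp.single β2 1 := by
  ext bb
  rw [Finsupp.add_apply, Finsupp.smul_apply, Finsupp.smul_apply, Finsupp.single_apply,
    Finsupp.single_apply]
  rcases classify3 bb with rfl | rfl
  · rw [if_pos rfl, if_neg (show ¬(β2 = β1) from fun h => β1_ne_β2 h.symm)]; simp
  · rw [if_neg β1_ne_β2, if_pos rfl]; simp

lemma hδ3_1 : ACdiff 3 (3-2) (Finsupp.single β1 (1:ℤ))
    = (2:ℤ) • Finsupp.single (ACtop 3 h3le) 1 := by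
  rw [← compl3_2, ACdiff_compl 3 h3le 2 (by norm_num) (by norm_num),
    show (2*(-1:ℤ)^2) = 2 by norm_num]

lemma hδ3_2 : ACdiff 3 (3-2) (Finsupp.single β2 (1:ℤ))
    = (-2:ℤ) • Finsupp.single (ACtop 3 h3le) 1 := by
  rw [← compl3_1, ACdiff_compl 3 h3le 1 (by norm_num) (by norm_num),
    show (2*(-1:ℤ)^1) = -2 by norm_num]

lemma keriff3 (z : ACMod 3 (3-2)) (hz : ACdiff 3 (3-2) z = 0) : z β1 = z β2 := by
  have heq : ACdiff 3 (3-2) z = (z β1 * 2 + z β2 * (-2)) • Finsupp.single (ACtop 3 h3le) 1 := by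
    conv_lhs => rw [zdecomp3 z]
    rw [map_add, map_smul, map_smul, hδ3_1, hδ3_2, smul_smul, smul_smul, ← add_smul]
  rw [hz] at heq
  have happ := congrArg (fun f : ACMod 3 (3-2+1) => f (ACtop 3 h3le)) heq
  simp at happ
  omega

lemma hδ30 : ACdiff 3 0 (Finsupp.single bE3 (1:ℤ))
    = (-3:ℤ) • (Finsupp.single β1 1 + Finsupp.single β2 1) := by
  rw [ACdiff_single, one_smul]
  ext bb
  rw [ACdiffSingle_apply, show (bE3 : ACBasis 3 0).1 = ∅ from rfl,
    show Finset.Ioo 0 3 \ ∅ = {1, 2} from by decide,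
    Finset.sum_pair (by norm_num : (1:ℕ) ≠ 2)]
  rw [Finsupp.smul_apply, Finsupp.add_apply, Finsupp.single_apply, Finsupp.single_apply]
  rcases classify3 bb with rfl | rfl
  · rw [if_pos (show insert 1 ∅ = (β1 : ACBasis 3 (3-2)).1 from by decide),
      if_neg (show ¬(insert 2 ∅ = (β1 : ACBasis 3 (3-2)).1) from by decide),
      if_pos rfl, if_neg (show ¬(β2 = β1) from fun h => β1_ne_β2 h.symm),
      show ACcoef 3 ∅ 1 = -3 from by decide]
    norm_num
  · rw [if_neg (show ¬(insert 1 ∅ = (β2 : ACBasis 3 (3-2)).1) from by decide),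
      if_pos (show insert 2 ∅ = (β2 : ACBasis 3 (3-2)).1 from by decide),
      if_neg β1_ne_β2, if_pos rfl,
      show ACcoef 3 ∅ 2 = -3 from by decide]
    norm_num

lemma inB3 (z : ACMod 3 (3-2)) (hz : ACdiff 3 (3-2) z = 0) (hdvd : (3:ℤ) ∣ z β1) :
    ∃ x : ACMod 3 0, ACdiff 3 0 x = z := by
  obtain ⟨t, ht⟩ := hdvd
  refine ⟨(-t) • Finsupp.single bE3 1, ?_⟩
  rw [map_smul, hδ30, smul_smul, show (-t) * (-3:ℤ) = 3*t by ring]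
  conv_rhs => rw [zdecomp3 z]
  rw [← keriff3 z hz, ht, smul_add]

lemma Bdvd3 (z : ACMod 3 (3-2)) (x : ACMod 3 0) (hx : ACdiff 3 0 x = z) :
    (3:ℤ) ∣ z β1 := by
  have hxdec : x = x bE3 • Finsupp.single bE3 1 := by
    ext bb; rw [classify30 bb]; simp [Finsupp.single_apply]
  rw [hxdec, map_smul, hδ30, smul_smul] at hx
  have happ := congrArg (fun f : ACMod 3 (3-2) => f β1) hx
  have hne21 : (if β2 = β1 then (1:ℤ) else 0) = 0 := if_neg (fun h => β1_ne_β2 h.symm)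
  simp only [Finsupp.smul_apply, Finsupp.add_apply, Finsupp.single_apply, if_pos rfl, hne21,
    eq_self_iff_true, if_true, smul_eq_mul] at happ
  exact ⟨-(x bE3), by rw [← happ]; ring⟩

def ψ3 : ACZ 3 (3-2) →ₗ[ℤ] ZMod 3 :=
  (LinearMap.toSpanSingleton ℤ (ZMod 3) 1).comp
    ((Finsupp.lapply β1).comp (ACZ 3 (3-2)).subtype)

lemma ψ3_apply (w : ACZ 3 (3-2)) : ψ3 w = (w.1 β1) • (1 : ZMod 3) := rfl
lemma hu2_3 : ACdiff 3 (3-2) (ACcompl 3 2 + ACcompl 3 1) = 0 := by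
  rw [map_add, ACdiff_compl 3 h3le 2 (by norm_num) (by norm_num),
    ACdiff_compl 3 h3le 1 (by norm_num) (by norm_num), ← add_smul,
    show (2*(-1:ℤ)^2 + 2*(-1:ℤ)^1) = 0 by norm_num, zero_smul]

def z03 : ACZ 3 (3-2) := ⟨ACcompl 3 2 + ACcompl 3 1, LinearMap.mem_ker.mpr hu2_3⟩

lemma z03_coeff : (z03).1 β1 = 1 := by
  show (ACcompl 3 2 + ACcompl 3 1) β1 = 1
  rw [Finsupp.add_apply, compl3_2, compl3_1, Finsupp.single_apply, Finsupp.single_apply,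
    if_pos rfl, if_neg (show ¬(β2 = β1) from fun h => β1_ne_β2 h.symm)]
  norm_num

lemma kerψ3 : LinearMap.ker ψ3 = Submodule.comap (ACZ 3 (3-2)).subtype (ACB 3 (3-2)) := by
  ext w
  rw [LinearMap.mem_ker, Submodule.mem_comap]
  rw [ψ3_apply, zsmul_one]
  rw [ZMod.intCast_zmod_eq_zero_iff_dvd]
  constructor
  · intro h0
    obtain ⟨x, hx⟩ := inB3 w.1 (LinearMap.mem_ker.mp w.2) (by exact_mod_cast h0)
    exact ⟨x, hx⟩
  · rintro ⟨x, hx⟩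
    exact_mod_cast Bdvd3 w.1 x hx

lemma surjψ3 : Function.Surjective ψ3 := by
  intro ww
  obtain ⟨n, rfl⟩ := ZMod.intCast_surjective ww
  refine ⟨n • z03, ?_⟩
  rw [map_smul, ψ3_apply, z03_coeff]
  simp

lemma part3 : Nonempty (ACH 3 (3-2) ≃+ ZMod 3) ∧
    ∃ z : ACZ 3 (3-2), (z : ACMod 3 (3-2)) = ACcompl 3 2 + ACcompl 3 1 ∧
      ∀ y : ACH 3 (3-2), ∃ n : ℤ, y = n • ACHmk 3 (3-2) z := by
  refine ⟨⟨((Submodule.quotEquivOfEq _ _ kerψ3.symm).trans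
      (ψ3.quotKerEquivOfSurjective surjψ3)).toAddEquiv⟩, z03, rfl, ?_⟩
  intro y
  obtain ⟨w, rfl⟩ := Submodule.Quotient.mk_surjective _ y
  obtain ⟨n, hn⟩ := ZMod.intCast_surjective (ψ3 w)
  refine ⟨n, ?_⟩
  show Submodule.Quotient.mk w = n • Submodule.Quotient.mk z03
  rw [← Submodule.Quotient.mk_smul, Submodule.Quotient.eq, ← kerψ3, LinearMap.mem_ker,
    map_sub, map_smul, ψ3_apply z03, z03_coeff, ← hn]
  simp [zsmul_one]
/-! ### d = 4 -/

lemma h4le : (2:ℕ) ≤ 4 := by norm_num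

def γ1 : ACBasis 4 (4-2) := ⟨{2,3}, by decide⟩
def γ2 : ACBasis 4 (4-2) := ⟨{1,3}, by decide⟩
def γ3 : ACBasis 4 (4-2) := ⟨{1,2}, by decide⟩
def D1 : ACBasis 4 1 := ⟨{1}, by decide⟩
def D2 : ACBasis 4 1 := ⟨{2}, by decide⟩
def D3 : ACBasis 4 1 := ⟨{3}, by decide⟩

lemma γ12 : γ1 ≠ γ2 := fun h => absurd (congrArg Subtype.val h) (by decide)
lemma γ13 : γ1 ≠ γ3 := fun h => absurd (congrArg Subtype.val h) (by decide)
lemma γ23 : γ2 ≠ γ3 := fun h => absurd (congrArg Subtype.val h) (by decide)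
lemma D12 : D1 ≠ D2 := fun h => absurd (congrArg Subtype.val h) (by decide)
lemma D13 : D1 ≠ D3 := fun h => absurd (congrArg Subtype.val h) (by decide)
lemma D23 : D2 ≠ D3 := fun h => absurd (congrArg Subtype.val h) (by decide)

lemma classify4 (b : ACBasis 4 (4-2)) : b = γ1 ∨ b = γ2 ∨ b = γ3 := by
  obtain ⟨x, y, hxy, hs⟩ := Finset.card_eq_two.mp b.2.2
  have hx : x ∈ Finset.Ioo 0 4 := b.2.1 (by rw [hs]; exact Finset.mem_insert_self x {y})
  have hy : y ∈ Finset.Ioo 0 4 := b.2.1 (by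
    rw [hs]; exact Finset.mem_insert_of_mem (Finset.mem_singleton_self y))
  rw [Finset.mem_Ioo] at hx hy
  obtain ⟨hx1, hx2⟩ := hx
  obtain ⟨hy1, hy2⟩ := hy
  interval_cases x <;> interval_cases y <;>
    first
    | exact absurd rfl hxy
    | exact Or.inl (Subtype.ext (by rw [hs]; decide))
    | exact Or.inr (Or.inl (Subtype.ext (by rw [hs]; decide)))
    | exact Or.inr (Or.inr (Subtype.ext (by rw [hs]; decide)))

lemma classify41 (b : ACBasis 4 1) : b = D1 ∨ b = D2 ∨ b = D3 := by
  obtain ⟨a, ha⟩ := Finset.card_eq_one.mp b.2.2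
  have hmem : a ∈ Finset.Ioo 0 4 := b.2.1 (by rw [ha]; exact Finset.mem_singleton_self a)
  rw [Finset.mem_Ioo] at hmem
  obtain ⟨hm1, hm2⟩ := hmem
  interval_cases a
  · exact Or.inl (Subtype.ext (by rw [ha]; rfl))
  · exact Or.inr (Or.inl (Subtype.ext (by rw [ha]; rfl)))
  · exact Or.inr (Or.inr (Subtype.ext (by rw [ha]; rfl)))

lemma compl4_1 : ACcompl 4 1 = Finsupp.single γ1 1 := by
  rw [ACcompl, dif_pos (show 0 < 1 ∧ 1 < 4 by omega)]
  exact congrArg (fun b => Finsupp.single b (1:ℤ)) (Subtype.ext (by decide))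

lemma compl4_2 : ACcompl 4 2 = Finsupp.single γ2 1 := by
  rw [ACcompl, dif_pos (show 0 < 2 ∧ 2 < 4 by omega)]
  exact congrArg (fun b => Finsupp.single b (1:ℤ)) (Subtype.ext (by decide))

lemma compl4_3 : ACcompl 4 3 = Finsupp.single γ3 1 := by
  rw [ACcompl, dif_pos (show 0 < 3 ∧ 3 < 4 by omega)]
  exact congrArg (fun b => Finsupp.single b (1:ℤ)) (Subtype.ext (by decide))

lemma zdecomp4 (z : ACMod 4 (4-2)) :
    z = z γ1 • Finsupp.single γ1 1 + z γ2 • Finsupp.single γ2 1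
      + z γ3 • Finsupp.single γ3 1 := by
  ext bb
  rw [Finsupp.add_apply, Finsupp.add_apply, Finsupp.smul_apply, Finsupp.smul_apply,
    Finsupp.smul_apply, Finsupp.single_apply, Finsupp.single_apply, Finsupp.single_apply]
  rcases classify4 bb with rfl | rfl | rfl
  · rw [if_pos rfl, if_neg (fun h => γ12 h.symm), if_neg (fun h => γ13 h.symm)]; simp
  · rw [if_neg γ12, if_pos rfl, if_neg (fun h => γ23 h.symm)]; simp
  · rw [if_neg γ13, if_neg γ23, if_pos rfl]; simp

lemma zdecomp41 (x : ACMod 4 1) :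
    x = x D1 • Finsupp.single D1 1 + x D2 • Finsupp.single D2 1
      + x D3 • Finsupp.single D3 1 := by
  ext bb
  rw [Finsupp.add_apply, Finsupp.add_apply, Finsupp.smul_apply, Finsupp.smul_apply,
    Finsupp.smul_apply, Finsupp.single_apply, Finsupp.single_apply, Finsupp.single_apply]
  rcases classify41 bb with rfl | rfl | rfl
  · rw [if_pos rfl, if_neg (fun h => D12 h.symm), if_neg (fun h => D13 h.symm)]; simp
  · rw [if_neg D12, if_pos rfl, if_neg (fun h => D23 h.symm)]; simp
  · rw [if_neg D13, if_neg D23, if_pos rfl]; simp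

lemma hδ4_1 : ACdiff 4 (4-2) (Finsupp.single γ1 (1:ℤ))
    = (-2:ℤ) • Finsupp.single (ACtop 4 h4le) 1 := by
  rw [← compl4_1, ACdiff_compl 4 h4le 1 (by norm_num) (by norm_num),
    show (2*(-1:ℤ)^1) = -2 by norm_num]

lemma hδ4_2 : ACdiff 4 (4-2) (Finsupp.single γ2 (1:ℤ))
    = (2:ℤ) • Finsupp.single (ACtop 4 h4le) 1 := by
  rw [← compl4_2, ACdiff_compl 4 h4le 2 (by norm_num) (by norm_num),
    show (2*(-1:ℤ)^2) = 2 by norm_num]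

lemma hδ4_3 : ACdiff 4 (4-2) (Finsupp.single γ3 (1:ℤ))
    = (-2:ℤ) • Finsupp.single (ACtop 4 h4le) 1 := by
  rw [← compl4_3, ACdiff_compl 4 h4le 3 (by norm_num) (by norm_num),
    show (2*(-1:ℤ)^3) = -2 by norm_num]

lemma keriff4 (z : ACMod 4 (4-2)) (hz : ACdiff 4 (4-2) z = 0) : z γ2 = z γ1 + z γ3 := by
  have heq : ACdiff 4 (4-2) z
      = (z γ1 * (-2) + z γ2 * 2 + z γ3 * (-2)) • Finsupp.single (ACtop 4 h4le) 1 := by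
    conv_lhs => rw [zdecomp4 z]
    rw [map_add, map_add, map_smul, map_smul, map_smul, hδ4_1, hδ4_2, hδ4_3,
      smul_smul, smul_smul, smul_smul, ← add_smul, ← add_smul]
  rw [hz] at heq
  have happ := congrArg (fun f : ACMod 4 (4-2+1) => f (ACtop 4 h4le)) heq
  simp at happ
  omega
lemma hδD1 : ACdiff 4 1 (Finsupp.single D1 (1:ℤ))
    = (3:ℤ) • Finsupp.single γ3 1 + (3:ℤ) • Finsupp.single γ2 1 := by
  rw [ACdiff_single, one_smul]
  ext bb
  rw [ACdiffSingle_apply, show (D1 : ACBasis 4 1).1 = {1} from rfl,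
    show Finset.Ioo 0 4 \ {1} = {2, 3} from by decide,
    Finset.sum_pair (by norm_num : (2:ℕ) ≠ 3),
    Finsupp.add_apply, Finsupp.smul_apply, Finsupp.smul_apply, Finsupp.single_apply,
    Finsupp.single_apply]
  rcases classify4 bb with rfl | rfl | rfl
  · rw [if_neg (show ¬(insert 2 {1} = (γ1 : ACBasis 4 (4-2)).1) from by decide),
      if_neg (show ¬(insert 3 {1} = (γ1 : ACBasis 4 (4-2)).1) from by decide),
      if_neg (fun h => γ13 h.symm), if_neg (fun h => γ12 h.symm)]
    norm_num
  · rw [if_neg (show ¬(insert 2 {1} = (γ2 : ACBasis 4 (4-2)).1) from by decide),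
      if_pos (show insert 3 {1} = (γ2 : ACBasis 4 (4-2)).1 from by decide),
      if_neg (fun h => γ23 h.symm), if_pos rfl,
      show ACcoef 4 {1} 3 = 3 from by decide]
    norm_num
  · rw [if_pos (show insert 2 {1} = (γ3 : ACBasis 4 (4-2)).1 from by decide),
      if_neg (show ¬(insert 3 {1} = (γ3 : ACBasis 4 (4-2)).1) from by decide),
      if_pos rfl, if_neg γ23,
      show ACcoef 4 {1} 2 = 3 from by decide]
    norm_num

lemma hδD2 : ACdiff 4 1 (Finsupp.single D2 (1:ℤ))
    = (-2:ℤ) • Finsupp.single γ3 1 + (2:ℤ) • Finsupp.single γ1 1 := by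
  rw [ACdiff_single, one_smul]
  ext bb
  rw [ACdiffSingle_apply, show (D2 : ACBasis 4 1).1 = {2} from rfl,
    show Finset.Ioo 0 4 \ {2} = {1, 3} from by decide,
    Finset.sum_pair (by norm_num : (1:ℕ) ≠ 3),
    Finsupp.add_apply, Finsupp.smul_apply, Finsupp.smul_apply, Finsupp.single_apply,
    Finsupp.single_apply]
  rcases classify4 bb with rfl | rfl | rfl
  · rw [if_neg (show ¬(insert 1 {2} = (γ1 : ACBasis 4 (4-2)).1) from by decide),
      if_pos (show insert 3 {2} = (γ1 : ACBasis 4 (4-2)).1 from by decide),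
      if_neg (fun h => γ13 h.symm), if_pos rfl,
      show ACcoef 4 {2} 3 = 2 from by decide]
    norm_num
  · rw [if_neg (show ¬(insert 1 {2} = (γ2 : ACBasis 4 (4-2)).1) from by decide),
      if_neg (show ¬(insert 3 {2} = (γ2 : ACBasis 4 (4-2)).1) from by decide),
      if_neg (fun h => γ23 h.symm), if_neg γ12]
    norm_num
  · rw [if_pos (show insert 1 {2} = (γ3 : ACBasis 4 (4-2)).1 from by decide),
      if_neg (show ¬(insert 3 {2} = (γ3 : ACBasis 4 (4-2)).1) from by decide),
      if_pos rfl, if_neg γ13,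
      show ACcoef 4 {2} 1 = -2 from by decide]
    norm_num

lemma hδD3 : ACdiff 4 1 (Finsupp.single D3 (1:ℤ))
    = (-3:ℤ) • Finsupp.single γ2 1 + (-3:ℤ) • Finsupp.single γ1 1 := by
  rw [ACdiff_single, one_smul]
  ext bb
  rw [ACdiffSingle_apply, show (D3 : ACBasis 4 1).1 = {3} from rfl,
    show Finset.Ioo 0 4 \ {3} = {1, 2} from by decide,
    Finset.sum_pair (by norm_num : (1:ℕ) ≠ 2),
    Finsupp.add_apply, Finsupp.smul_apply, Finsupp.smul_apply, Finsupp.single_apply,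
    Finsupp.single_apply]
  rcases classify4 bb with rfl | rfl | rfl
  · rw [if_neg (show ¬(insert 1 {3} = (γ1 : ACBasis 4 (4-2)).1) from by decide),
      if_pos (show insert 2 {3} = (γ1 : ACBasis 4 (4-2)).1 from by decide),
      if_neg (fun h => γ12 h.symm), if_pos rfl,
      show ACcoef 4 {3} 2 = -3 from by decide]
    norm_num
  · rw [if_pos (show insert 1 {3} = (γ2 : ACBasis 4 (4-2)).1 from by decide),
      if_neg (show ¬(insert 2 {3} = (γ2 : ACBasis 4 (4-2)).1) from by decide),
      if_pos rfl, if_neg γ12,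
      show ACcoef 4 {3} 1 = -3 from by decide]
    norm_num
  · rw [if_neg (show ¬(insert 1 {3} = (γ3 : ACBasis 4 (4-2)).1) from by decide),
      if_neg (show ¬(insert 2 {3} = (γ3 : ACBasis 4 (4-2)).1) from by decide),
      if_neg γ23, if_neg γ13]
    norm_num

lemma inB4 (z : ACMod 4 (4-2)) (hz : ACdiff 4 (4-2) z = 0)
    (hdvd : (3:ℤ) ∣ z γ1 + z γ3) : ∃ x : ACMod 4 1, ACdiff 4 1 x = z := by
  obtain ⟨s, hs⟩ := hdvd
  refine ⟨(s - z γ1) • Finsupp.single D1 1 + (- z γ1) • Finsupp.single D2 1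
    + (- z γ1) • Finsupp.single D3 1, ?_⟩
  rw [map_add, map_add, map_smul, map_smul, map_smul, hδD1, hδD2, hδD3]
  conv_rhs => rw [zdecomp4 z]
  rw [keriff4 z hz, show z γ3 = 3*s - z γ1 by omega]
  module

lemma Bdvd4 (z : ACMod 4 (4-2)) (x : ACMod 4 1) (hx : ACdiff 4 1 x = z) :
    (3:ℤ) ∣ z γ1 + z γ3 := by
  rw [zdecomp41 x, map_add, map_add, map_smul, map_smul, map_smul, hδD1, hδD2, hδD3] at hx
  have happ1 := congrArg (fun f : ACMod 4 (4-2) => f γ1) hx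
  have happ3 := congrArg (fun f : ACMod 4 (4-2) => f γ3) hx
  have e1 : (if γ3 = γ1 then (1:ℤ) else 0) = 0 := if_neg (fun h => γ13 h.symm)
  have e2 : (if γ2 = γ1 then (1:ℤ) else 0) = 0 := if_neg (fun h => γ12 h.symm)
  have e3 : (if γ1 = γ3 then (1:ℤ) else 0) = 0 := if_neg γ13
  have e4 : (if γ2 = γ3 then (1:ℤ) else 0) = 0 := if_neg γ23
  have e5 : (if γ1 = γ1 then (1:ℤ) else 0) = 1 := if_pos rfl
  have e6 : (if γ3 = γ3 then (1:ℤ) else 0) = 1 := if_pos rfl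
  simp only [Finsupp.add_apply, Finsupp.smul_apply, Finsupp.single_apply, e1, e2, e3, e4, e5,
    e6, eq_self_iff_true, if_true, smul_eq_mul] at happ1 happ3
  refine ⟨x D1 - x D3, ?_⟩
  rw [← happ1, ← happ3]
  ring

def ψ4 : ACZ 4 (4-2) →ₗ[ℤ] ZMod 3 :=
  (LinearMap.toSpanSingleton ℤ (ZMod 3) 1).comp
    (((Finsupp.lapply γ1) + (Finsupp.lapply γ3)).comp (ACZ 4 (4-2)).subtype)

lemma ψ4_apply (w : ACZ 4 (4-2)) : ψ4 w = (w.1 γ1 + w.1 γ3) • (1 : ZMod 3) := rfl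

lemma hu2_4 : ACdiff 4 (4-2) (ACcompl 4 2 + ACcompl 4 1) = 0 := by
  rw [map_add, ACdiff_compl 4 h4le 2 (by norm_num) (by norm_num),
    ACdiff_compl 4 h4le 1 (by norm_num) (by norm_num), ← add_smul,
    show (2*(-1:ℤ)^2 + 2*(-1:ℤ)^1) = 0 by norm_num, zero_smul]

def z04 : ACZ 4 (4-2) := ⟨ACcompl 4 2 + ACcompl 4 1, LinearMap.mem_ker.mpr hu2_4⟩

lemma z04_coeff : z04.1 γ1 + z04.1 γ3 = 1 := by
  show (ACcompl 4 2 + ACcompl 4 1) γ1 + (ACcompl 4 2 + ACcompl 4 1) γ3 = 1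
  rw [Finsupp.add_apply, Finsupp.add_apply, compl4_2, compl4_1, Finsupp.single_apply,
    Finsupp.single_apply, Finsupp.single_apply, Finsupp.single_apply,
    if_neg (fun h => γ12 h.symm), if_pos rfl, if_neg γ23, if_neg γ13]
  norm_num

lemma kerψ4 : LinearMap.ker ψ4 = Submodule.comap (ACZ 4 (4-2)).subtype (ACB 4 (4-2)) := by
  ext w
  rw [LinearMap.mem_ker, Submodule.mem_comap]
  rw [ψ4_apply, zsmul_one, ZMod.intCast_zmod_eq_zero_iff_dvd]
  constructor
  · intro h0
    obtain ⟨x, hx⟩ := inB4 w.1 (LinearMap.mem_ker.mp w.2) (by exact_mod_cast h0)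
    exact ⟨x, hx⟩
  · rintro ⟨x, hx⟩
    exact_mod_cast Bdvd4 w.1 x hx

lemma surjψ4 : Function.Surjective ψ4 := by
  intro ww
  obtain ⟨n, rfl⟩ := ZMod.intCast_surjective ww
  refine ⟨n • z04, ?_⟩
  rw [map_smul, ψ4_apply, z04_coeff]
  simp

lemma part4 : Nonempty (ACH 4 (4-2) ≃+ ZMod 3) ∧
    ∃ z : ACZ 4 (4-2), (z : ACMod 4 (4-2)) = ACcompl 4 2 + ACcompl 4 1 ∧
      ∀ y : ACH 4 (4-2), ∃ n : ℤ, y = n • ACHmk 4 (4-2) z := by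
  refine ⟨⟨((Submodule.quotEquivOfEq _ _ kerψ4.symm).trans
      (ψ4.quotKerEquivOfSurjective surjψ4)).toAddEquiv⟩, z04, rfl, ?_⟩
  intro y
  obtain ⟨w, rfl⟩ := Submodule.Quotient.mk_surjective _ y
  obtain ⟨n, hn⟩ := ZMod.intCast_surjective (ψ4 w)
  refine ⟨n, ?_⟩
  show Submodule.Quotient.mk w = n • Submodule.Quotient.mk z04
  rw [← Submodule.Quotient.mk_smul, Submodule.Quotient.eq, ← kerψ4, LinearMap.mem_ker,
    map_sub, map_smul, ψ4_apply z04, z04_coeff, ← hn]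
  simp [zsmul_one]
/-- `H^{d-2}(AC(d)) ≅ ℤ/3` if `d ∈ {3,4}`, generated there by the class of
`u₂ = ⟨2⟩ᶜ + ⟨1⟩ᶜ`, and `H^{d-2}(AC(d)) = 0` otherwise. -/
theorem Hsubtop_aroneComplex (d : ℕ) (hd : 2 ≤ d) :
    ((d = 3 ∨ d = 4) →
      Nonempty (ACH d (d - 2) ≃+ ZMod 3) ∧
      ∃ z : ACZ d (d - 2),
        (z : ACMod d (d - 2)) = ACcompl d 2 + ACcompl d 1 ∧
        ∀ y : ACH d (d - 2), ∃ n : ℤ, y = n • ACHmk d (d - 2) z) ∧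
    (¬(d = 3 ∨ d = 4) → Subsingleton (ACH d (d - 2))) := by
  constructor
  · rintro (rfl | rfl)
    · exact part3
    · exact part4
  · intro hne
    rcases (show d = 2 ∨ 5 ≤ d by omega) with rfl | h5
    · exact H2_subsingleton
    · obtain ⟨e, rfl⟩ : ∃ e, d = e + 5 := ⟨d - 5, by omega⟩
      exact H5_subsingleton e

end
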